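/- For λ > 0, s > r > 0, the function H(x) = (6/(λ^3 (s-r)^2 (2s+r) x^3))·((2 + λ r x)e^{-λ r x} - (2 + (2s-r)λ x + λ^2 s(s-r)x^2)e^{-λ s x}) satisfies ∫_0^∞ H(x) dx = 3/(λ(2s+r)). -/

import Mathlib

/-! With `a = λ r` and `b = λ s`, the integrand is, up to a constant, the Laplace transform of the
density `u (u - a)` on `[a, b]`:
`((2 + a x) e^{-a x} - (2 + (2b - a) x + b (b - a) x²) e^{-b x}) / x³ = ∫_a^b u (u - a) e^{-u x} du`.
Integrating in `x` first turns each `e^{-u x}` into `1 / u`, leaving `∫_a^b (u - a) du = (b - a)² / 2`. -/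

open MeasureTheory Real Set

theorem integral_Ioi_exp_neg_mul {u : ℝ} (hu : 0 < u) :
    ∫ x in Ioi (0 : ℝ), exp (-(u * x)) = u⁻¹ := by
  simp_rw [← neg_mul]
  rw [integral_exp_mul_Ioi (neg_neg_of_pos hu), mul_zero, exp_zero, neg_div_neg_eq, one_div]

theorem integral_Ioi_integral_Ioc_mul_exp_neg {f : ℝ → ℝ} {a b : ℝ} (ha : 0 < a)
    (hf : IntegrableOn f (Ioc a b)) :
    ∫ x in Ioi (0 : ℝ), ∫ u in Ioc a b, f u * exp (-(u * x)) = ∫ u in Ioc a b, f u / u := by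
  have hint : Integrable (Function.uncurry fun x u => f u * exp (-(u * x)))
      ((volume.restrict (Ioi 0)).prod (volume.restrict (Ioc a b))) := by
    refine ((exp_neg_integrableOn_Ioi 0 ha).mul_prod hf.norm).mono' ?_ ?_
    · exact hf.aestronglyMeasurable.comp_snd.mul (by fun_prop : Continuous fun p : ℝ × ℝ =>
        exp (-(p.2 * p.1))).aestronglyMeasurable
    · rw [Measure.prod_restrict]
      refine ae_restrict_of_forall_mem (measurableSet_Ioi.prod measurableSet_Ioc) ?_
      rintro ⟨x, u⟩ ⟨hx, hu⟩
      simp only [Function.uncurry_apply_pair, norm_mul, norm_eq_abs, abs_exp]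
      rw [mul_comm]
      gcongr
      nlinarith [hu.1, mem_Ioi.mp hx]
  rw [integral_integral_swap hint]
  refine setIntegral_congr_fun measurableSet_Ioc fun u hu => ?_
  rw [integral_const_mul, integral_Ioi_exp_neg_mul (ha.trans hu.1), div_eq_mul_inv]

theorem integral_mul_sub_mul_exp_neg (a b : ℝ) {x : ℝ} (hx : x ≠ 0) :
    ∫ u in a..b, u * (u - a) * exp (-(u * x)) =
      ((2 + a * x) * exp (-(a * x)) -
        (2 + (2 * b - a) * x + b * (b - a) * x ^ 2) * exp (-(b * x))) / x ^ 3 := by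
  have hderiv : ∀ u, HasDerivAt
      (fun u => -(((u - a) * u * x ^ 2 + (2 * u - a) * x + 2) * exp (-(u * x))) / x ^ 3)
      (u * (u - a) * exp (-(u * x))) u := by
    intro u
    have hpoly := (((((hasDerivAt_id' u).sub_const a).fun_mul (hasDerivAt_id' u)).mul_const
      (x ^ 2)).fun_add ((((hasDerivAt_id' u).const_mul 2).sub_const a).mul_const x)).add_const 2
    have hexp := ((hasDerivAt_id' u).mul_const x).fun_neg.exp
    refine ((hpoly.fun_mul hexp).fun_neg.div_const (x ^ 3)).congr_deriv ?_
    field_simp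
    ring
  rw [intervalIntegral.integral_eq_sub_of_hasDerivAt (fun u _ => hderiv u)
    (by apply Continuous.intervalIntegrable; fun_prop)]
  field_simp
  ring

theorem integral_Ioi_exp_poly_div_cube {a b : ℝ} (ha : 0 < a) (hab : a ≤ b) :
    ∫ x in Ioi (0 : ℝ), ((2 + a * x) * exp (-(a * x)) -
        (2 + (2 * b - a) * x + b * (b - a) * x ^ 2) * exp (-(b * x))) / x ^ 3 =
      (b - a) ^ 2 / 2 := by
  have hdensity : IntegrableOn (fun u : ℝ => u * (u - a)) (Ioc a b) :=
    (by fun_prop : Continuous fun u : ℝ => u * (u - a)).integrableOn_Icc.mono_set Ioc_subset_Icc_self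
  calc _ = ∫ x in Ioi (0 : ℝ), ∫ u in Ioc a b, u * (u - a) * exp (-(u * x)) :=
        setIntegral_congr_fun measurableSet_Ioi fun x hx => by
          rw [← intervalIntegral.integral_of_le hab, integral_mul_sub_mul_exp_neg a b hx.ne']
    _ = ∫ u in Ioc a b, u * (u - a) / u := integral_Ioi_integral_Ioc_mul_exp_neg ha hdensity
    _ = ∫ u in a..b, (u - a) := by
        rw [intervalIntegral.integral_of_le hab]
        exact setIntegral_congr_fun measurableSet_Ioc fun u hu =>
          mul_div_cancel_left₀ _ (ha.trans hu.1).ne'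
    _ = (b - a) ^ 2 / 2 := by
        rw [intervalIntegral.integral_comp_sub_right (fun u => u), integral_id]
        ring

theorem stit_mean_length_interior_segment (l r s : ℝ) (hl : 0 < l) (hr : 0 < r) (hrs : r < s) :
    ∫ x in Set.Ioi (0:ℝ),
      (6 / (l ^ 3 * (s - r) ^ 2 * (2 * s + r) * x ^ 3)) *
        ((2 + l * r * x) * Real.exp (-(l * r * x)) -
         (2 + (2 * s - r) * l * x + l ^ 2 * s * (s - r) * x ^ 2) * Real.exp (-(l * s * x))) =
      3 / (l * (2 * s + r)) := by
  calc _ = ∫ x in Ioi (0 : ℝ), 6 / (l ^ 3 * (s - r) ^ 2 * (2 * s + r)) *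
        (((2 + l * r * x) * exp (-(l * r * x)) - (2 + (2 * (l * s) - l * r) * x +
          l * s * (l * s - l * r) * x ^ 2) * exp (-(l * s * x))) / x ^ 3) := by
        congr 1
        ext x
        rw [div_mul_div_comm, div_mul_eq_mul_div]
        ring
    _ = 6 / (l ^ 3 * (s - r) ^ 2 * (2 * s + r)) * ((l * s - l * r) ^ 2 / 2) := by
        rw [integral_const_mul, integral_Ioi_exp_poly_div_cube (by positivity) (by gcongr)]
    _ = 3 / (l * (2 * s + r)) := by
        have hsr : s - r ≠ 0 := (sub_pos.mpr hrs).ne'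
        field_simp
        ring
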